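/- The harmonicity axiom implies its spatial dual: if in a point-plane incidence structure satisfying Axioms [1]–[4] every complete quadrangle of points in a plane has non-collinear diagonal points, then for every point P and planes π₀,π₁,π₂,π₃ with {π_i,π_j,π_k}^♮ = {P} for all distinct i,j,k, the diagonal planes δ₁, δ₂, δ₃ satisfy {δ₁,δ₂,δ₃}^♮ = {P} (in particular they are non-collinear). -/
import Mathlib


variable {Point Plane : Type*}

/-- The set of planes incident to every point of `S` (the operation `S^♮`). -/
def planesOf (inc : Point → Plane → Prop) (S : Set Point) : Set Plane :=
  {π | ∀ A ∈ S, inc A π}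

/-- The set of points incident to every plane of `T` (the operation `T^♮`). -/
def pointsOf (inc : Point → Plane → Prop) (T : Set Plane) : Set Point :=
  {A | ∀ π ∈ T, inc A π}

/-- A set with more than two elements. -/
def AtLeastThree {α : Type*} (S : Set α) : Prop :=
  ∃ x y z, x ∈ S ∧ y ∈ S ∧ z ∈ S ∧ x ≠ y ∧ x ≠ z ∧ y ≠ z

/-- AXIOM [1]. -/
def Axiom1 (inc : Point → Plane → Prop) : Prop :=
  (∀ A : Point, planesOf inc {A} ≠ Set.univ) ∧
  (∀ π : Plane, pointsOf inc {π} ≠ Set.univ)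

/-- AXIOM [2]. -/
def Axiom2 (inc : Point → Plane → Prop) : Prop :=
  (∀ A B : Point, AtLeastThree (planesOf inc {A, B})) ∧
  (∀ α β : Plane, AtLeastThree (pointsOf inc {α, β}))

/-- AXIOM [3]. -/
def Axiom3 (inc : Point → Plane → Prop) : Prop :=
  (∀ A B C : Point, planesOf inc {A, B, C} ≠ ∅) ∧
  (∀ α β γ : Plane, pointsOf inc {α, β, γ} ≠ ∅)

/-- AXIOM [4]. -/
def Axiom4 (inc : Point → Plane → Prop) : Prop :=
  ∀ (A B : Point) (α β : Plane), A ≠ B → α ≠ β →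
    inc A α → inc A β → inc B α → inc B β →
    planesOf inc {A, B} = planesOf inc (pointsOf inc {α, β}) ∧
    pointsOf inc {α, β} = pointsOf inc (planesOf inc {A, B})

/-- A line, given by its point-set `lP` and plane-set `lPl`. -/
def IsLine (inc : Point → Plane → Prop) (lP : Set Point) (lPl : Set Plane) : Prop :=
  ∃ (A B : Point) (α β : Plane), A ≠ B ∧ α ≠ β ∧
    inc A α ∧ inc A β ∧ inc B α ∧ inc B β ∧
    lP = pointsOf inc {α, β} ∧ lPl = planesOf inc {A, B}

def CollinearPoints (inc : Point → Plane → Prop) (S : Set Point) : Prop :=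
  ∃ lP lPl, IsLine inc lP lPl ∧ S ⊆ lP

def CollinearPlanes (inc : Point → Plane → Prop) (T : Set Plane) : Prop :=
  ∃ lP lPl, IsLine inc lP lPl ∧ T ⊆ lPl

/-- A complete quadrangle `Q 0 Q 1 Q 2 Q 3` in the plane `π`. -/
def CompleteQuadrangle (inc : Point → Plane → Prop) (π : Plane) (Q : Fin 4 → Point) : Prop :=
  (∀ i : Fin 4, inc (Q i) π) ∧
  ∀ i j k : Fin 4, i ≠ j → i ≠ k → j ≠ k → planesOf inc {Q i, Q j, Q k} = {π}

/-- AXIOM [H]: the diagonal points of a complete quadrangle are noncollinear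
(equivalently, their set of common planes is exactly `{π}`). -/
def AxiomH (inc : Point → Plane → Prop) : Prop :=
  ∀ (π : Plane) (Q : Fin 4 → Point) (D1 D2 D3 : Point),
    CompleteQuadrangle inc π Q →
    pointsOf inc (planesOf inc {Q 0, Q 1}) ∩ pointsOf inc (planesOf inc {Q 2, Q 3}) = {D1} →
    pointsOf inc (planesOf inc {Q 0, Q 2}) ∩ pointsOf inc (planesOf inc {Q 3, Q 1}) = {D2} →
    pointsOf inc (planesOf inc {Q 0, Q 3}) ∩ pointsOf inc (planesOf inc {Q 1, Q 2}) = {D3} →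
    planesOf inc {D1, D2, D3} = {π}

section AuxHDual

variable {Point Plane : Type*} {inc : Point → Plane → Prop}

lemma AxH.mem_pointsOf_pair {α β : Plane} {A : Point} :
    A ∈ pointsOf inc {α, β} ↔ inc A α ∧ inc A β := by
  simp [pointsOf]

lemma AxH.mem_pointsOf_triple {α β γ : Plane} {A : Point} :
    A ∈ pointsOf inc {α, β, γ} ↔ inc A α ∧ inc A β ∧ inc A γ := by
  simp [pointsOf]

lemma AxH.mem_planesOf_pair {A B : Point} {τ : Plane} :
    τ ∈ planesOf inc {A, B} ↔ inc A τ ∧ inc B τ := by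
  simp [planesOf]

lemma AxH.mem_planesOf_triple {A B C : Point} {τ : Plane} :
    τ ∈ planesOf inc {A, B, C} ↔ inc A τ ∧ inc B τ ∧ inc C τ := by
  simp [planesOf]

lemma AxH.three_ne_singleton {α : Type*} {S : Set α} (h : AtLeastThree S) (x : α) :
    S ≠ {x} := by
  obtain ⟨a, b, c, ha, hb, hc, hab, hac, hbc⟩ := h
  intro hS
  rw [hS] at ha hb
  exact hab (ha.trans hb.symm)

lemma AxH.exists_pair_of_three {α : Type*} {S : Set α} (h : AtLeastThree S) :
    ∃ a b, a ∈ S ∧ b ∈ S ∧ a ≠ b := by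
  obtain ⟨a, b, _, ha, hb, _, hab, _, _⟩ := h
  exact ⟨a, b, ha, hb, hab⟩

lemma AxH.lineEq (h4 : Axiom4 inc) {α β : Plane} {A B : Point} (hαβ : α ≠ β) (hAB : A ≠ B)
    (hAα : inc A α) (hAβ : inc A β) (hBα : inc B α) (hBβ : inc B β) :
    pointsOf inc {α, β} = pointsOf inc (planesOf inc {A, B}) :=
  (h4 A B α β hAB hαβ hAα hAβ hBα hBβ).2

variable {π : Fin 4 → Plane} {P : Point}

/-- P is incident to each of the four planes. -/
lemma AxH.Pinc (hP : ∀ i j k : Fin 4, i ≠ j → i ≠ k → j ≠ k → pointsOf inc {π i, π j, π k} = {P})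
    (i : Fin 4) : inc P (π i) := by
  have hjk : ∀ i : Fin 4, ∃ j k : Fin 4, i ≠ j ∧ i ≠ k ∧ j ≠ k := by decide
  obtain ⟨j, k, hij, hik, hjk'⟩ := hjk i
  have h := hP i j k hij hik hjk'
  have hPm : P ∈ pointsOf inc {π i, π j, π k} := by rw [h]; rfl
  exact (AxH.mem_pointsOf_triple.1 hPm).1

lemma AxH.sub3 (h2 : Axiom2 inc)
    (hP : ∀ i j k : Fin 4, i ≠ j → i ≠ k → j ≠ k → pointsOf inc {π i, π j, π k} = {P})
    {i j k : Fin 4} (hij : i ≠ j) (hik : i ≠ k) (hjk : j ≠ k)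
    (h : ∀ Z ∈ pointsOf inc {π i, π j}, inc Z (π k)) : False := by
  obtain ⟨x, y, hx, hy, hxy⟩ := AxH.exists_pair_of_three (h2.2 (π i) (π j))
  have hx2 := AxH.mem_pointsOf_pair.1 hx
  have hy2 := AxH.mem_pointsOf_pair.1 hy
  have hx' : x ∈ pointsOf inc {π i, π j, π k} :=
    AxH.mem_pointsOf_triple.2 ⟨hx2.1, hx2.2, h x hx⟩
  have hy' : y ∈ pointsOf inc {π i, π j, π k} :=
    AxH.mem_pointsOf_triple.2 ⟨hy2.1, hy2.2, h y hy⟩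
  rw [hP i j k hij hik hjk] at hx' hy'
  exact hxy (hx'.trans hy'.symm)

lemma AxH.piNe (h2 : Axiom2 inc)
    (hP : ∀ i j k : Fin 4, i ≠ j → i ≠ k → j ≠ k → pointsOf inc {π i, π j, π k} = {P})
    {i j : Fin 4} (hij : i ≠ j) : π i ≠ π j := by
  intro h
  have hk : ∀ i j : Fin 4, ∃ k : Fin 4, i ≠ k ∧ j ≠ k := by decide
  obtain ⟨k, hik, hjk⟩ := hk i j
  have hset : ({π i, π j, π k} : Set Plane) = {π i, π k} := by rw [← h]; simp
  have := hP i j k hij hik hjk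
  rw [hset] at this
  exact AxH.three_ne_singleton (h2.2 (π i) (π k)) P this

/-- Two distinct lines of the pencil through P lie in a unique plane: any plane
containing the lines `π i ∩ π j` and `π i ∩ π k` equals `π i`. -/
lemma AxH.planeU (h2 : Axiom2 inc) (h4 : Axiom4 inc)
    (hP : ∀ i j k : Fin 4, i ≠ j → i ≠ k → j ≠ k → pointsOf inc {π i, π j, π k} = {P})
    {i j k : Fin 4} (hij : i ≠ j) (hik : i ≠ k) (hjk : j ≠ k) {ρ : Plane}
    (hx : ∀ Z ∈ pointsOf inc {π i, π j}, inc Z ρ)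
    (hy : ∀ Z ∈ pointsOf inc {π i, π k}, inc Z ρ) : ρ = π i := by
  by_contra hρ
  obtain ⟨A, B, hA, hB, hAB⟩ := AxH.exists_pair_of_three (h2.2 (π i) (π j))
  have hA2 := AxH.mem_pointsOf_pair.1 hA
  have hB2 := AxH.mem_pointsOf_pair.1 hB
  have E1 : pointsOf inc {ρ, π i} = pointsOf inc (planesOf inc {A, B}) :=
    AxH.lineEq h4 hρ hAB (hx A hA) hA2.1 (hx B hB) hB2.1
  have E2 : pointsOf inc {π i, π j} = pointsOf inc (planesOf inc {A, B}) :=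
    AxH.lineEq h4 (AxH.piNe h2 hP hij) hAB hA2.1 hA2.2 hB2.1 hB2.2
  have E : pointsOf inc {π i, π j} = pointsOf inc {ρ, π i} := E2.trans E1.symm
  obtain ⟨C, D, hC, hD, hCD⟩ := AxH.exists_pair_of_three (h2.2 (π i) (π k))
  have hC2 := AxH.mem_pointsOf_pair.1 hC
  have hD2 := AxH.mem_pointsOf_pair.1 hD
  have hCm : C ∈ pointsOf inc {π i, π j} := by
    rw [E]; exact AxH.mem_pointsOf_pair.2 ⟨hy C hC, hC2.1⟩
  have hDm : D ∈ pointsOf inc {π i, π j} := by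
    rw [E]; exact AxH.mem_pointsOf_pair.2 ⟨hy D hD, hD2.1⟩
  have hCm2 := AxH.mem_pointsOf_pair.1 hCm
  have hDm2 := AxH.mem_pointsOf_pair.1 hDm
  have E3 : pointsOf inc {π i, π k} = pointsOf inc (planesOf inc {C, D}) :=
    AxH.lineEq h4 (AxH.piNe h2 hP hik) hCD hC2.1 hC2.2 hD2.1 hD2.2
  have E4 : pointsOf inc {π i, π j} = pointsOf inc (planesOf inc {C, D}) :=
    AxH.lineEq h4 (AxH.piNe h2 hP hij) hCD hCm2.1 hCm2.2 hDm2.1 hDm2.2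
  refine AxH.sub3 h2 hP hij hik hjk (fun Z hZ => ?_)
  have : Z ∈ pointsOf inc {π i, π k} := by rw [E3, ← E4]; exact hZ
  exact (AxH.mem_pointsOf_pair.1 this).2

/-- Two of the six lines through P meet a plane avoiding P in distinct points. -/
lemma AxH.qNe (h2 : Axiom2 inc) (h4 : Axiom4 inc)
    (hP : ∀ i j k : Fin 4, i ≠ j → i ≠ k → j ≠ k → pointsOf inc {π i, π j, π k} = {P})
    {σ : Plane} (hσ : ¬ inc P σ)
    {i j a b : Fin 4} (hij : i ≠ j) (hab : a ≠ b) (hai : a ≠ i) (haj : a ≠ j)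
    {R1 R2 : Point} (h1i : inc R1 (π i)) (h1j : inc R1 (π j)) (h1σ : inc R1 σ)
    (h2a : inc R2 (π a)) (h2b : inc R2 (π b)) (h2σ : inc R2 σ) : R1 ≠ R2 := by
  intro e
  subst e
  have hR1P : P ≠ R1 := by intro e; rw [← e] at h1σ; exact hσ h1σ
  have E1 : pointsOf inc {π i, π j} = pointsOf inc (planesOf inc {P, R1}) :=
    AxH.lineEq h4 (AxH.piNe h2 hP hij) hR1P (AxH.Pinc hP i) (AxH.Pinc hP j) h1i h1j
  have E2 : pointsOf inc {π a, π b} = pointsOf inc (planesOf inc {P, R1}) :=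
    AxH.lineEq h4 (AxH.piNe h2 hP hab) hR1P (AxH.Pinc hP a) (AxH.Pinc hP b) h2a h2b
  refine AxH.sub3 h2 hP hij hai.symm haj.symm (fun Z hZ => ?_)
  have : Z ∈ pointsOf inc {π a, π b} := by rw [E2, ← E1]; exact hZ
  exact (AxH.mem_pointsOf_pair.1 this).1

/-- A line through P meets a plane avoiding P in at most one point. -/
lemma AxH.onept (h4 : Axiom4 inc) {σ : Plane} (hσ : ¬ inc P σ)
    {γ1 γ2 : Plane} (hγ : γ1 ≠ γ2) (hP1 : inc P γ1) (hP2 : inc P γ2)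
    {A B : Point} (hA1 : inc A γ1) (hA2 : inc A γ2) (hAσ : inc A σ)
    (hB1 : inc B γ1) (hB2 : inc B γ2) (hBσ : inc B σ) : A = B := by
  by_contra hAB
  have E : pointsOf inc {γ1, γ2} = pointsOf inc (planesOf inc {A, B}) :=
    AxH.lineEq h4 hγ hAB hA1 hA2 hB1 hB2
  have hPm : P ∈ pointsOf inc (planesOf inc {A, B}) := by
    rw [← E]; exact AxH.mem_pointsOf_pair.2 ⟨hP1, hP2⟩
  exact hσ (hPm σ (AxH.mem_planesOf_pair.2 ⟨hAσ, hBσ⟩))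

/-- Noncollinearity of the traces of three suitable lines through P on σ. -/
lemma AxH.NC (h2 : Axiom2 inc) (h3 : Axiom3 inc) (h4 : Axiom4 inc)
    (hP : ∀ i j k : Fin 4, i ≠ j → i ≠ k → j ≠ k → pointsOf inc {π i, π j, π k} = {P})
    {σ : Plane} (hσ : ¬ inc P σ)
    {i j k a b : Fin 4} (hij : i ≠ j) (hik : i ≠ k) (hjk : j ≠ k)
    (hab : a ≠ b) (hia : i ≠ a) (hib : i ≠ b)
    {R1 R2 R3 : Point}
    (h1i : inc R1 (π i)) (h1j : inc R1 (π j)) (h1σ : inc R1 σ)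
    (h2i : inc R2 (π i)) (h2k : inc R2 (π k)) (h2σ : inc R2 σ)
    (h3a : inc R3 (π a)) (h3b : inc R3 (π b)) (h3σ : inc R3 σ)
    {τ : Plane} (h1τ : inc R1 τ) (h2τ : inc R2 τ) (h3τ : inc R3 τ) : τ = σ := by
  by_cases hτ : τ = σ
  · exact hτ
  exfalso
  have hR1P : P ≠ R1 := by intro e; rw [← e] at h1σ; exact hσ h1σ
  have hR2P : P ≠ R2 := by intro e; rw [← e] at h2σ; exact hσ h2σ
  have hR3P : P ≠ R3 := by intro e; rw [← e] at h3σ; exact hσ h3σ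
  have hR12 : R1 ≠ R2 :=
    AxH.qNe h2 h4 hP hσ hij (hik.symm : k ≠ i) hik.symm hjk.symm h1i h1j h1σ h2k h2i h2σ
  have E5 : pointsOf inc {σ, τ} = pointsOf inc (planesOf inc {R1, R2}) :=
    AxH.lineEq h4 (fun e => hτ e.symm) hR12 h1σ h1τ h2σ h2τ
  have hR3' : R3 ∈ pointsOf inc (planesOf inc {R1, R2}) := by
    rw [← E5]; exact AxH.mem_pointsOf_pair.2 ⟨h3σ, h3τ⟩
  obtain ⟨ρ, hρ⟩ := Set.nonempty_iff_ne_empty.2 (h3.1 P R1 R2)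
  have hρ3 := AxH.mem_planesOf_triple.1 hρ
  obtain ⟨hρP, hρR1, hρR2⟩ := hρ3
  have hR3ρ : inc R3 ρ := hR3' ρ (AxH.mem_planesOf_pair.2 ⟨hρR1, hρR2⟩)
  have hx : ∀ Z ∈ pointsOf inc {π i, π j}, inc Z ρ := by
    intro Z hZ
    have E : pointsOf inc {π i, π j} = pointsOf inc (planesOf inc {P, R1}) :=
      AxH.lineEq h4 (AxH.piNe h2 hP hij) hR1P (AxH.Pinc hP i) (AxH.Pinc hP j) h1i h1j
    rw [E] at hZ
    exact hZ ρ (AxH.mem_planesOf_pair.2 ⟨hρP, hρR1⟩)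
  have hy : ∀ Z ∈ pointsOf inc {π i, π k}, inc Z ρ := by
    intro Z hZ
    have E : pointsOf inc {π i, π k} = pointsOf inc (planesOf inc {P, R2}) :=
      AxH.lineEq h4 (AxH.piNe h2 hP hik) hR2P (AxH.Pinc hP i) (AxH.Pinc hP k) h2i h2k
    rw [E] at hZ
    exact hZ ρ (AxH.mem_planesOf_pair.2 ⟨hρP, hρR2⟩)
  have hρπ : ρ = π i := AxH.planeU h2 h4 hP hij hik hjk hx hy
  refine AxH.sub3 h2 hP hab hia.symm hib.symm (fun Z hZ => ?_)
  have E : pointsOf inc {π a, π b} = pointsOf inc (planesOf inc {P, R3}) :=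
    AxH.lineEq h4 (AxH.piNe h2 hP hab) hR3P (AxH.Pinc hP a) (AxH.Pinc hP b) h3a h3b
  rw [E] at hZ
  have : inc Z ρ := hZ ρ (AxH.mem_planesOf_pair.2 ⟨hρP, hR3ρ⟩)
  rwa [hρπ] at this

lemma AxH.mkTriple {σ : Plane} {A B C : Point}
    (hA : inc A σ) (hB : inc B σ) (hC : inc C σ)
    (h : ∀ τ, inc A τ → inc B τ → inc C τ → τ = σ) :
    planesOf inc {A, B, C} = {σ} := by
  ext τ
  constructor
  · intro hτ
    have h3 := AxH.mem_planesOf_triple.1 hτ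
    exact h τ h3.1 h3.2.1 h3.2.2
  · intro hτ
    rw [Set.mem_singleton_iff] at hτ
    subst hτ
    exact AxH.mem_planesOf_triple.2 ⟨hA, hB, hC⟩

end AuxHDual
theorem axiomH_implies_dual (inc : Point → Plane → Prop) [Nonempty Point] [Nonempty Plane]
    (h1 : Axiom1 inc) (h2 : Axiom2 inc) (h3 : Axiom3 inc) (h4 : Axiom4 inc)
    (hH : AxiomH inc) :
    ∀ (P : Point) (π : Fin 4 → Plane) (δ1 δ2 δ3 : Plane),
      (∀ i j k : Fin 4, i ≠ j → i ≠ k → j ≠ k → pointsOf inc {π i, π j, π k} = {P}) →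
      planesOf inc (pointsOf inc {π 0, π 1}) ∩ planesOf inc (pointsOf inc {π 2, π 3}) = {δ1} →
      planesOf inc (pointsOf inc {π 0, π 2}) ∩ planesOf inc (pointsOf inc {π 3, π 1}) = {δ2} →
      planesOf inc (pointsOf inc {π 0, π 3}) ∩ planesOf inc (pointsOf inc {π 1, π 2}) = {δ3} →
      pointsOf inc {δ1, δ2, δ3} = {P} := by
  intro P π δ1 δ2 δ3 hP hδ1 hδ2 hδ3
  -- membership facts for the diagonal planes
  have hδ1m : δ1 ∈ planesOf inc (pointsOf inc {π 0, π 1}) ∩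
      planesOf inc (pointsOf inc {π 2, π 3}) := by rw [hδ1]; rfl
  have hδ2m : δ2 ∈ planesOf inc (pointsOf inc {π 0, π 2}) ∩
      planesOf inc (pointsOf inc {π 3, π 1}) := by rw [hδ2]; rfl
  have hδ3m : δ3 ∈ planesOf inc (pointsOf inc {π 0, π 3}) ∩
      planesOf inc (pointsOf inc {π 1, π 2}) := by rw [hδ3]; rfl
  have incPδ1 : inc P δ1 :=
    hδ1m.1 P (AxH.mem_pointsOf_pair.2 ⟨AxH.Pinc hP 0, AxH.Pinc hP 1⟩)
  have incPδ2 : inc P δ2 :=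
    hδ2m.1 P (AxH.mem_pointsOf_pair.2 ⟨AxH.Pinc hP 0, AxH.Pinc hP 2⟩)
  have incPδ3 : inc P δ3 :=
    hδ3m.1 P (AxH.mem_pointsOf_pair.2 ⟨AxH.Pinc hP 0, AxH.Pinc hP 3⟩)
  have hδ12 : δ1 ≠ δ2 := by
    intro e
    have hxx : ∀ Z ∈ pointsOf inc {π 0, π 1}, inc Z δ1 := hδ1m.1
    have hyy : ∀ Z ∈ pointsOf inc {π 0, π 2}, inc Z δ1 := by rw [e]; exact hδ2m.1
    have hδπ : δ1 = π 0 :=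
      AxH.planeU h2 h4 hP (show (0:Fin 4) ≠ 1 by decide) (show (0:Fin 4) ≠ 2 by decide)
        (show (1:Fin 4) ≠ 2 by decide) hxx hyy
    refine AxH.sub3 h2 hP (show (2:Fin 4) ≠ 3 by decide) (show (2:Fin 4) ≠ 0 by decide)
      (show (3:Fin 4) ≠ 0 by decide) (fun Z hZ => ?_)
    have : inc Z δ1 := hδ1m.2 Z hZ
    rwa [hδπ] at this
  ext Q
  rw [Set.mem_singleton_iff]
  constructor
  swap
  · intro hQ
    subst hQ
    exact AxH.mem_pointsOf_triple.2 ⟨incPδ1, incPδ2, incPδ3⟩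
  intro hQmem
  obtain ⟨incQδ1, incQδ2, incQδ3⟩ := AxH.mem_pointsOf_triple.1 hQmem
  by_contra hQP
  -- pick a plane σ not through P
  obtain ⟨σ, hσ'⟩ : ∃ σ : Plane, σ ∉ planesOf inc {P} := by
    by_contra hc
    push_neg at hc
    exact h1.1 P (Set.eq_univ_iff_forall.2 hc)
  have hσ : ¬ inc P σ := fun h => hσ' (by intro A hA; rw [Set.mem_singleton_iff] at hA; subst hA; exact h)
  have hπσ : ∀ i : Fin 4, π i ≠ σ := fun i e => hσ (e ▸ AxH.Pinc hP i)
  have hδ1σ : δ1 ≠ σ := fun e => hσ (e ▸ incPδ1)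
  have hδ2σ : δ2 ≠ σ := fun e => hσ (e ▸ incPδ2)
  have hδ3σ : δ3 ≠ σ := fun e => hσ (e ▸ incPδ3)
  -- the traces of the six lines on σ
  have getQ : ∀ i j : Fin 4, ∃ R : Point, inc R (π i) ∧ inc R (π j) ∧ inc R σ := by
    intro i j
    obtain ⟨R, hR⟩ := Set.nonempty_iff_ne_empty.2 (h3.2 (π i) (π j) σ)
    exact ⟨R, AxH.mem_pointsOf_triple.1 hR⟩
  obtain ⟨Q01, h01a, h01b, h01σ⟩ := getQ 0 1
  obtain ⟨Q23, h23a, h23b, h23σ⟩ := getQ 2 3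
  obtain ⟨Q02, h02a, h02b, h02σ⟩ := getQ 0 2
  obtain ⟨Q13, h13a, h13b, h13σ⟩ := getQ 1 3
  obtain ⟨Q03, h03a, h03b, h03σ⟩ := getQ 0 3
  obtain ⟨Q12, h12a, h12b, h12σ⟩ := getQ 1 2
  -- the point X on line PQ and on σ
  obtain ⟨α, β, hα, hβ, hαβ⟩ := AxH.exists_pair_of_three (h2.1 P Q)
  have hα2 := AxH.mem_planesOf_pair.1 hα
  have hβ2 := AxH.mem_planesOf_pair.1 hβ
  have ElPQ : pointsOf inc {α, β} = pointsOf inc (planesOf inc {P, Q}) :=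
    AxH.lineEq h4 hαβ (fun e => hQP e.symm) hα2.1 hβ2.1 hα2.2 hβ2.2
  obtain ⟨X, hXm⟩ := Set.nonempty_iff_ne_empty.2 (h3.2 α β σ)
  obtain ⟨hXα, hXβ, hXσ⟩ := AxH.mem_pointsOf_triple.1 hXm
  have hXline : X ∈ pointsOf inc (planesOf inc {P, Q}) := by
    rw [← ElPQ]; exact AxH.mem_pointsOf_pair.2 ⟨hXα, hXβ⟩
  have incXδ1 : inc X δ1 := hXline δ1 (AxH.mem_planesOf_pair.2 ⟨incPδ1, incQδ1⟩)
  have incXδ2 : inc X δ2 := hXline δ2 (AxH.mem_planesOf_pair.2 ⟨incPδ2, incQδ2⟩)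
  have incXδ3 : inc X δ3 := hXline δ3 (AxH.mem_planesOf_pair.2 ⟨incPδ3, incQδ3⟩)
  -- incidences of the Q's with the diagonal planes
  have incQ01δ1 : inc Q01 δ1 := hδ1m.1 Q01 (AxH.mem_pointsOf_pair.2 ⟨h01a, h01b⟩)
  have incQ23δ1 : inc Q23 δ1 := hδ1m.2 Q23 (AxH.mem_pointsOf_pair.2 ⟨h23a, h23b⟩)
  have incQ02δ2 : inc Q02 δ2 := hδ2m.1 Q02 (AxH.mem_pointsOf_pair.2 ⟨h02a, h02b⟩)
  have incQ13δ2 : inc Q13 δ2 := hδ2m.2 Q13 (AxH.mem_pointsOf_pair.2 ⟨h13b, h13a⟩)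
  have incQ03δ3 : inc Q03 δ3 := hδ3m.1 Q03 (AxH.mem_pointsOf_pair.2 ⟨h03a, h03b⟩)
  have incQ12δ3 : inc Q12 δ3 := hδ3m.2 Q12 (AxH.mem_pointsOf_pair.2 ⟨h12a, h12b⟩)
  -- distinctness of the four quadrangle points
  have ne0123 : Q01 ≠ Q23 :=
    AxH.qNe h2 h4 hP hσ (show (0:Fin 4) ≠ 1 by decide) (show (2:Fin 4) ≠ 3 by decide) (show (2:Fin 4) ≠ 0 by decide) (show (2:Fin 4) ≠ 1 by decide)
      h01a h01b h01σ h23a h23b h23σ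
  have ne0102 : Q01 ≠ Q02 :=
    AxH.qNe h2 h4 hP hσ (show (0:Fin 4) ≠ 1 by decide) (show (2:Fin 4) ≠ 0 by decide) (show (2:Fin 4) ≠ 0 by decide) (show (2:Fin 4) ≠ 1 by decide)
      h01a h01b h01σ h02b h02a h02σ
  have ne0213 : Q02 ≠ Q13 :=
    AxH.qNe h2 h4 hP hσ (show (0:Fin 4) ≠ 2 by decide) (show (1:Fin 4) ≠ 3 by decide) (show (1:Fin 4) ≠ 0 by decide) (show (1:Fin 4) ≠ 2 by decide)
      h02a h02b h02σ h13a h13b h13σ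
  have ne1323 : Q13 ≠ Q23 :=
    AxH.qNe h2 h4 hP hσ (show (1:Fin 4) ≠ 3 by decide) (show (2:Fin 4) ≠ 3 by decide) (show (2:Fin 4) ≠ 1 by decide) (show (2:Fin 4) ≠ 3 by decide)
      h13a h13b h13σ h23a h23b h23σ
  have ne0113 : Q01 ≠ Q13 :=
    AxH.qNe h2 h4 hP hσ (show (0:Fin 4) ≠ 1 by decide) (show (3:Fin 4) ≠ 1 by decide) (show (3:Fin 4) ≠ 0 by decide) (show (3:Fin 4) ≠ 1 by decide)
      h01a h01b h01σ h13b h13a h13σ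
  have ne2302 : Q23 ≠ Q02 :=
    AxH.qNe h2 h4 hP hσ (show (2:Fin 4) ≠ 3 by decide) (show (0:Fin 4) ≠ 2 by decide) (show (0:Fin 4) ≠ 2 by decide) (show (0:Fin 4) ≠ 3 by decide)
      h23a h23b h23σ h02a h02b h02σ
  -- the four noncollinearity facts
  have HT1 : ∀ τ, inc Q01 τ → inc Q23 τ → inc Q02 τ → τ = σ := fun τ a b c =>
    AxH.NC h2 h3 h4 hP hσ (show (0:Fin 4) ≠ 1 by decide) (show (0:Fin 4) ≠ 2 by decide) (show (1:Fin 4) ≠ 2 by decide) (show (2:Fin 4) ≠ 3 by decide) (show (0:Fin 4) ≠ 2 by decide) (show (0:Fin 4) ≠ 3 by decide)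
      h01a h01b h01σ h02a h02b h02σ h23a h23b h23σ a c b
  have HT2 : ∀ τ, inc Q01 τ → inc Q23 τ → inc Q13 τ → τ = σ := fun τ a b c =>
    AxH.NC h2 h3 h4 hP hσ (show (1:Fin 4) ≠ 0 by decide) (show (1:Fin 4) ≠ 3 by decide) (show (0:Fin 4) ≠ 3 by decide) (show (2:Fin 4) ≠ 3 by decide) (show (1:Fin 4) ≠ 2 by decide) (show (1:Fin 4) ≠ 3 by decide)
      h01b h01a h01σ h13a h13b h13σ h23a h23b h23σ a c b
  have HT3 : ∀ τ, inc Q01 τ → inc Q02 τ → inc Q13 τ → τ = σ := fun τ a b c =>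
    AxH.NC h2 h3 h4 hP hσ (show (0:Fin 4) ≠ 1 by decide) (show (0:Fin 4) ≠ 2 by decide) (show (1:Fin 4) ≠ 2 by decide) (show (1:Fin 4) ≠ 3 by decide) (show (0:Fin 4) ≠ 1 by decide) (show (0:Fin 4) ≠ 3 by decide)
      h01a h01b h01σ h02a h02b h02σ h13a h13b h13σ a b c
  have HT4 : ∀ τ, inc Q23 τ → inc Q02 τ → inc Q13 τ → τ = σ := fun τ a b c =>
    AxH.NC h2 h3 h4 hP hσ (show (2:Fin 4) ≠ 3 by decide) (show (2:Fin 4) ≠ 0 by decide) (show (3:Fin 4) ≠ 0 by decide) (show (1:Fin 4) ≠ 3 by decide) (show (2:Fin 4) ≠ 1 by decide) (show (2:Fin 4) ≠ 3 by decide)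
      h23a h23b h23σ h02b h02a h02σ h13a h13b h13σ a b c
  -- the complete quadrangle in σ
  set Qf : Fin 4 → Point := ![Q01, Q23, Q02, Q13] with hQf
  have hquad : CompleteQuadrangle inc σ Qf := by
    constructor
    · intro i
      fin_cases i
      · exact h01σ
      · exact h23σ
      · exact h02σ
      · exact h13σ
    · intro i j k hij hik hjk
      fin_cases i <;> fin_cases j <;> fin_cases k <;>
        first
          | exact absurd rfl hij
          | exact absurd rfl hik
          | exact absurd rfl hjk
          | exact AxH.mkTriple (by assumption) (by assumption) (by assumption)
              (fun τ x y z => by solve_by_elim [HT1, HT2, HT3, HT4])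
  -- the three diagonal-point singleton equations
  have l1 : pointsOf inc (planesOf inc {Q01, Q23}) = pointsOf inc {δ1, σ} :=
    (AxH.lineEq h4 hδ1σ ne0123 incQ01δ1 h01σ incQ23δ1 h23σ).symm
  have l2 : pointsOf inc (planesOf inc {Q02, Q13}) = pointsOf inc {δ2, σ} :=
    (AxH.lineEq h4 hδ2σ ne0213 incQ02δ2 h02σ incQ13δ2 h13σ).symm
  have l3 : pointsOf inc (planesOf inc {Q01, Q02}) = pointsOf inc {π 0, σ} :=
    (AxH.lineEq h4 (hπσ 0) ne0102 h01a h01σ h02a h02σ).symm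
  have l4 : pointsOf inc (planesOf inc {Q13, Q23}) = pointsOf inc {π 3, σ} :=
    (AxH.lineEq h4 (hπσ 3) ne1323 h13b h13σ h23b h23σ).symm
  have l5 : pointsOf inc (planesOf inc {Q01, Q13}) = pointsOf inc {π 1, σ} :=
    (AxH.lineEq h4 (hπσ 1) ne0113 h01b h01σ h13a h13σ).symm
  have l6 : pointsOf inc (planesOf inc {Q23, Q02}) = pointsOf inc {π 2, σ} :=
    (AxH.lineEq h4 (hπσ 2) ne2302 h23a h23σ h02b h02σ).symm
  have e1 : pointsOf inc (planesOf inc {Q01, Q23}) ∩ pointsOf inc (planesOf inc {Q02, Q13})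
      = {X} := by
    ext Y
    rw [Set.mem_singleton_iff]
    constructor
    · rintro ⟨hY1, hY2⟩
      rw [l1] at hY1; rw [l2] at hY2
      obtain ⟨hYδ1, hYσ⟩ := AxH.mem_pointsOf_pair.1 hY1
      obtain ⟨hYδ2, _⟩ := AxH.mem_pointsOf_pair.1 hY2
      exact AxH.onept h4 hσ hδ12 incPδ1 incPδ2 hYδ1 hYδ2 hYσ incXδ1 incXδ2 hXσ
    · rintro rfl
      exact ⟨by rw [l1]; exact AxH.mem_pointsOf_pair.2 ⟨incXδ1, hXσ⟩,
             by rw [l2]; exact AxH.mem_pointsOf_pair.2 ⟨incXδ2, hXσ⟩⟩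
  have e2 : pointsOf inc (planesOf inc {Q01, Q02}) ∩ pointsOf inc (planesOf inc {Q13, Q23})
      = {Q03} := by
    ext Y
    rw [Set.mem_singleton_iff]
    constructor
    · rintro ⟨hY1, hY2⟩
      rw [l3] at hY1; rw [l4] at hY2
      obtain ⟨hY0, hYσ⟩ := AxH.mem_pointsOf_pair.1 hY1
      obtain ⟨hY3, _⟩ := AxH.mem_pointsOf_pair.1 hY2
      exact AxH.onept h4 hσ (AxH.piNe h2 hP (show (0:Fin 4) ≠ 3 by decide))
        (AxH.Pinc hP 0) (AxH.Pinc hP 3) hY0 hY3 hYσ h03a h03b h03σ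
    · rintro rfl
      exact ⟨by rw [l3]; exact AxH.mem_pointsOf_pair.2 ⟨h03a, h03σ⟩,
             by rw [l4]; exact AxH.mem_pointsOf_pair.2 ⟨h03b, h03σ⟩⟩
  have e3 : pointsOf inc (planesOf inc {Q01, Q13}) ∩ pointsOf inc (planesOf inc {Q23, Q02})
      = {Q12} := by
    ext Y
    rw [Set.mem_singleton_iff]
    constructor
    · rintro ⟨hY1, hY2⟩
      rw [l5] at hY1; rw [l6] at hY2
      obtain ⟨hY1', hYσ⟩ := AxH.mem_pointsOf_pair.1 hY1
      obtain ⟨hY2', _⟩ := AxH.mem_pointsOf_pair.1 hY2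
      exact AxH.onept h4 hσ (AxH.piNe h2 hP (show (1:Fin 4) ≠ 2 by decide))
        (AxH.Pinc hP 1) (AxH.Pinc hP 2) hY1' hY2' hYσ h12a h12b h12σ
    · rintro rfl
      exact ⟨by rw [l5]; exact AxH.mem_pointsOf_pair.2 ⟨h12a, h12σ⟩,
             by rw [l6]; exact AxH.mem_pointsOf_pair.2 ⟨h12b, h12σ⟩⟩
  have q0 : Qf 0 = Q01 := rfl
  have q1 : Qf 1 = Q23 := rfl
  have q2 : Qf 2 = Q02 := rfl
  have q3 : Qf 3 = Q13 := rfl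
  have hfinal : planesOf inc {X, Q03, Q12} = {σ} :=
    hH σ Qf X Q03 Q12 hquad
      (by rw [q0, q1, q2, q3]; exact e1)
      (by rw [q0, q2, q3, q1]; exact e2)
      (by rw [q0, q3, q1, q2]; exact e3)
  have hδ3mem : δ3 ∈ planesOf inc {X, Q03, Q12} :=
    AxH.mem_planesOf_triple.2 ⟨incXδ3, incQ03δ3, incQ12δ3⟩
  rw [hfinal, Set.mem_singleton_iff] at hδ3mem
  exact hδ3σ hδ3mem
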